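/- Let L ⊆ M_{n,d,t} be a t-spread lex set and N ⊆ M_{n,d,t} a t-spread strongly stable set with |L| ≤ |N|. Then |shad_t(L)| ≤ |shad_t(N)|. -/

import Mathlib

open Finset

/-- The set of `t`-spread "monomials" of degree `d` in variables `x_1,...,x_n`,
identified with `d`-element subsets of `{1,...,n}` with consecutive gaps `≥ t`. -/
def M (n d t : ℕ) : Finset (Finset ℕ) :=
  (Finset.powersetCard d (Finset.Icc 1 n)).filter
    (fun F => ∀ i ∈ F, ∀ j ∈ F, i < j → i + t ≤ j)

/-- The `τ`-shadow of a family `L ⊆ M n d t`. -/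
def shad (τ n d : ℕ) (L : Finset (Finset ℕ)) : Finset (Finset ℕ) :=
  (M n (d + 1) τ).filter (fun G => ∃ F ∈ L, F ⊆ G)

/-- `F >_lex G` : the smallest element of the symmetric difference belongs to `F`. -/
def lexGT (F G : Finset ℕ) : Prop :=
  ∃ k, k ∈ F ∧ k ∉ G ∧ ∀ j < k, (j ∈ F ↔ j ∈ G)

/-- `L` is a `t`-spread lex set in `M n d t` (a lex up-set). -/
def IsLexSet (n d t : ℕ) (L : Finset (Finset ℕ)) : Prop :=
  L ⊆ M n d t ∧ ∀ u ∈ L, ∀ v ∈ M n d t, lexGT v u → v ∈ L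

/-- `L` is a `t`-spread strongly stable set in `M n d t`. -/
def IsSSS (n d t : ℕ) (L : Finset (Finset ℕ)) : Prop :=
  L ⊆ M n d t ∧ ∀ F ∈ L, ∀ j ∈ F, ∀ i < j, i ∉ F →
    insert i (F.erase j) ∈ M n d t → insert i (F.erase j) ∈ L

/-- number of members of `L` with maximum element `= i`. -/
def mEq (i : ℕ) (L : Finset (Finset ℕ)) : ℕ :=
  (L.filter (fun F => i ∈ F ∧ ∀ j ∈ F, j ≤ i)).card

/-- number of members of `L` with maximum element `≤ i`. -/
def mLe (i : ℕ) (L : Finset (Finset ℕ)) : ℕ :=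
  (L.filter (fun F => ∀ j ∈ F, j ≤ i)).card

/-!
For a strongly stable family `S ⊆ M n d t` every set in `shad_t S` is uniquely `F ∪ {j}` with
`F ∈ S` and `max F + t ≤ j ≤ n`: remove the maximum and use strong stability. Hence
`|shad_t S| = ∑_{i ≤ n - t} mLe i S`, and it suffices to prove `mLe i L ≤ mLe i N` for all `i`.

This goes by induction on `d` and then on `n`. Truncations to maxima `≤ n - 1` stay lex resp.
strongly stable, so the induction on `n` only needs `mLe (n - 1) L ≤ mLe (n - 1) N`; as
`|L| ≤ |N|`, this is clear unless `N` has more members containing `n` than `L`. Removing `n` from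
those members (the link of `n`) turns `N` into a strongly stable family in `M (n - t) (d - 1) t`.
On the side of `L`, the link together with the sets `F \ {max F}` (`F ∈ L`, `n ∉ F`) is a lex
family, because `L` is lex, and it has at most one element outside the link, so it is no larger
than the link of `N`. The induction hypothesis compares the two, and counting their extensions by
one element below `n` gives the claim (for `d = 1` both sides are counted directly).
-/

def maxElt (F : Finset ℕ) : ℕ := F.sup id

lemma le_maxElt {F : Finset ℕ} {x : ℕ} (hx : x ∈ F) : x ≤ maxElt F :=
  le_sup (f := id) hx

lemma maxElt_le_iff {F : Finset ℕ} {b : ℕ} : maxElt F ≤ b ↔ ∀ x ∈ F, x ≤ b :=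
  Finset.sup_le_iff

lemma maxElt_mem {F : Finset ℕ} (h : F.Nonempty) : maxElt F ∈ F := by
  obtain ⟨b, hb, he⟩ := exists_mem_eq_sup F h id
  rwa [maxElt, he]

lemma lt_maxElt_of_mem_erase {F : Finset ℕ} {x : ℕ} (hx : x ∈ F.erase (maxElt F)) :
    x < maxElt F :=
  lt_of_le_of_ne (le_maxElt (mem_of_mem_erase hx)) (ne_of_mem_erase hx)

lemma maxElt_insert {u : Finset ℕ} {j : ℕ} (hj : ∀ x ∈ u, x < j) : maxElt (insert j u) = j := by
  refine le_antisymm (maxElt_le_iff.mpr fun x hx => ?_) (le_maxElt (mem_insert_self j u))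
  rcases mem_insert.mp hx with rfl | hx
  exacts [le_rfl, (hj x hx).le]

lemma eq_and_eq_of_insert_eq_insert {F F' : Finset ℕ} {j j' : ℕ} (hF : ∀ x ∈ F, x < j)
    (hF' : ∀ x ∈ F', x < j') (h : insert j F = insert j' F') : j = j' ∧ F = F' := by
  obtain rfl : j = j' := by rw [← maxElt_insert hF, h, maxElt_insert hF']
  refine ⟨rfl, ?_⟩
  rw [← erase_insert fun h => lt_irrefl j (hF j h), h, erase_insert fun h => lt_irrefl j (hF' j h)]

section Spread

variable {n m d e t i j b : ℕ} {F G u v : Finset ℕ} {X H L N S : Finset (Finset ℕ)}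

lemma mem_M_iff :
    F ∈ M n d t ↔ F.card = d ∧ F ⊆ Icc 1 n ∧ ∀ i ∈ F, ∀ j ∈ F, i < j → i + t ≤ j := by
  rw [M, mem_filter, mem_powersetCard, and_assoc, and_left_comm]

lemma card_of_mem_M (hF : F ∈ M n d t) : F.card = d :=
  (mem_M_iff.mp hF).1

lemma mem_Icc_of_mem_M (hF : F ∈ M n d t) (hx : i ∈ F) : 1 ≤ i ∧ i ≤ n :=
  mem_Icc.mp ((mem_M_iff.mp hF).2.1 hx)

lemma add_le_of_mem_M (hF : F ∈ M n d t) (hi : i ∈ F) (hj : j ∈ F) (hij : i < j) : i + t ≤ j :=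
  (mem_M_iff.mp hF).2.2 i hi j hj hij

lemma mem_M_of_forall_le (hF : F ∈ M n d t) (h : ∀ x ∈ F, x ≤ m) : F ∈ M m d t := by
  obtain ⟨hcard, -, hspread⟩ := mem_M_iff.mp hF
  exact mem_M_iff.mpr
    ⟨hcard, fun x hx => mem_Icc.mpr ⟨(mem_Icc_of_mem_M hF hx).1, h x hx⟩, hspread⟩

lemma M_mono (h : m ≤ n) : M m d t ⊆ M n d t :=
  fun _ hF => mem_M_of_forall_le hF fun _ hx => (mem_Icc_of_mem_M hF hx).2.trans h

lemma eq_empty_of_mem_M_zero (hF : F ∈ M n 0 t) : F = ∅ :=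
  card_eq_zero.mp (card_of_mem_M hF)

lemma one_le_maxElt (hF : F ∈ M n d t) (hd : 1 ≤ d) : 1 ≤ maxElt F :=
  (mem_Icc_of_mem_M hF (maxElt_mem (card_pos.mp (by rw [card_of_mem_M hF]; omega)))).1

lemma insert_mem_M (hu : u ∈ M m e t) (ht : 1 ≤ t) (hj : ∀ x ∈ u, x + t ≤ j) (hj1 : 1 ≤ j)
    (hjn : j ≤ n) : insert j u ∈ M n (e + 1) t := by
  have hju : j ∉ u := fun h => by have := hj j h; omega
  refine mem_M_iff.mpr ⟨by rw [card_insert_of_notMem hju, card_of_mem_M hu], fun x hx => ?_, ?_⟩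
  · rcases mem_insert.mp hx with rfl | hx
    · exact mem_Icc.mpr ⟨hj1, hjn⟩
    · have := hj x hx
      exact mem_Icc.mpr ⟨(mem_Icc_of_mem_M hu hx).1, by omega⟩
  · intro a ha c hc hac
    rcases mem_insert.mp ha with rfl | ha' <;> rcases mem_insert.mp hc with rfl | hc'
    · omega
    · have := hj c hc'; omega
    · exact hj a ha'
    · exact add_le_of_mem_M hu ha' hc' hac

lemma insert_mem_M_of_mem_M_sub (hu : u ∈ M (n - t) e t) (ht : 1 ≤ t) (hn : 1 ≤ n) :
    insert n u ∈ M n (e + 1) t :=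
  insert_mem_M hu ht (fun x hx => by have := mem_Icc_of_mem_M hu hx; omega) hn le_rfl

lemma notMem_of_mem_M_sub (hu : u ∈ M (n - t) e t) (ht : 1 ≤ t) : n ∉ u :=
  fun h => by have := mem_Icc_of_mem_M hu h; omega

lemma erase_mem_M_sub (hF : F ∈ M n d t) (hj : j ∈ F) (hmax : ∀ x ∈ F, x ≤ j) (hjn : j ≤ n) :
    F.erase j ∈ M (n - t) (d - 1) t := by
  refine mem_M_iff.mpr ⟨by rw [card_erase_of_mem hj, card_of_mem_M hF], fun x hx => ?_,
    fun a ha c hc => add_le_of_mem_M hF (mem_of_mem_erase ha) (mem_of_mem_erase hc)⟩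
  have hxF := mem_of_mem_erase hx
  have := add_le_of_mem_M hF hxF hj (lt_of_le_of_ne (hmax x hxF) (ne_of_mem_erase hx))
  exact mem_Icc.mpr ⟨(mem_Icc_of_mem_M hF hxF).1, by omega⟩

lemma erase_maxElt_mem_M (hF : F ∈ M n (e + 1) t) : F.erase (maxElt F) ∈ M (n - t) e t := by
  have hmax := maxElt_mem (card_pos.mp (by rw [card_of_mem_M hF]; omega))
  exact erase_mem_M_sub hF hmax (fun _ => le_maxElt) (mem_Icc_of_mem_M hF hmax).2

lemma lexGT_or_lexGT_of_ne (h : u ≠ v) : lexGT u v ∨ lexGT v u := by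
  have hne : (symmDiff u v).Nonempty := by
    rwa [nonempty_iff_ne_empty, Ne, ← bot_eq_empty, symmDiff_eq_bot]
  have hagree : ∀ j < (symmDiff u v).min' hne, (j ∈ u ↔ j ∈ v) := fun j hj => by
    by_contra hj'
    exact absurd (min'_le _ j (mem_symmDiff.mpr (by tauto))) (not_le.mpr hj)
  rcases mem_symmDiff.mp (min'_mem _ hne) with ⟨hu, hv⟩ | ⟨hv, hu⟩
  · exact Or.inl ⟨_, hu, hv, hagree⟩
  · exact Or.inr ⟨_, hv, hu, fun j hj => (hagree j hj).symm⟩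

lemma lexGT_insert_insert {j' : ℕ} (hcard : u.card = v.card) (hu : ∀ x ∈ u, x < j)
    (hv : ∀ x ∈ v, x < j') (h : lexGT u v) : lexGT (insert j u) (insert j' v) := by
  obtain ⟨k, hku, hkv, hagree⟩ := h
  -- otherwise `v ⊆ u.erase k`, which is smaller than `v`
  have hkj' : k < j' := by
    by_contra! hle
    have hsub : v ⊆ u.erase k := fun x hx => by
      have := hv x hx
      exact mem_erase.mpr ⟨by omega, (hagree x (by omega)).mpr hx⟩
    have := card_le_card hsub
    rw [card_erase_of_mem hku, hcard] at this
    have := card_pos.mpr ⟨k, hku⟩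
    omega
  have hkj : k < j := hu k hku
  refine ⟨k, mem_insert_of_mem hku, by simp [hkv, hkj'.ne], fun a ha => ?_⟩
  simp only [mem_insert, hagree a ha, (ha.trans hkj).ne, (ha.trans hkj').ne, false_or]

lemma IsLexSet.isSSS (hL : IsLexSet n d t L) : IsSSS n d t L := by
  refine ⟨hL.1, fun F hF j hj i hij hiF hmem => hL.2 F hF _ hmem ⟨i, mem_insert_self _ _, hiF, ?_⟩⟩
  intro a ha
  simp only [mem_insert, mem_erase, ha.ne, (ha.trans hij).ne, false_or, ne_eq, not_false_eq_true,
    true_and]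

def truncate (m : ℕ) (X : Finset (Finset ℕ)) : Finset (Finset ℕ) :=
  X.filter fun F => ∀ j ∈ F, j ≤ m

lemma IsLexSet.truncate (hL : IsLexSet n d t L) (hm : m ≤ n) :
    IsLexSet m d t (truncate m L) := by
  refine ⟨fun F hF => mem_M_of_forall_le (hL.1 (mem_filter.mp hF).1) (mem_filter.mp hF).2,
    fun u hu v hv hvu => mem_filter.mpr ⟨?_, fun x hx => (mem_Icc_of_mem_M hv hx).2⟩⟩
  exact hL.2 u (mem_filter.mp hu).1 v (M_mono hm hv) hvu

lemma IsSSS.truncate (hN : IsSSS n d t N) (hm : m ≤ n) : IsSSS m d t (truncate m N) := by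
  refine ⟨fun F hF => mem_M_of_forall_le (hN.1 (mem_filter.mp hF).1) (mem_filter.mp hF).2,
    fun F hF j hj i hij hiF hmem => mem_filter.mpr ⟨?_, fun x hx => (mem_Icc_of_mem_M hmem hx).2⟩⟩
  exact hN.2 F (mem_filter.mp hF).1 j hj i hij hiF (M_mono hm hmem)

lemma mLe_truncate (hi : i ≤ m) : mLe i (truncate m X) = mLe i X := by
  rw [mLe, mLe, truncate, filter_filter]
  exact congrArg card <| filter_congr fun F _ =>
    ⟨And.right, fun h => ⟨fun j hj => (h j hj).trans hi, h⟩⟩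

lemma mLe_eq_card (hX : X ⊆ M n d t) (hn : n ≤ i) : mLe i X = X.card :=
  congrArg card <| filter_true_of_mem fun _ hF _ hj => (mem_Icc_of_mem_M (hX hF) hj).2.trans hn

def link (n : ℕ) (X : Finset (Finset ℕ)) : Finset (Finset ℕ) :=
  (X.filter (n ∈ ·)).image (·.erase n)

lemma mem_link : u ∈ link n X ↔ n ∉ u ∧ insert n u ∈ X := by
  simp only [link, mem_image, mem_filter]
  constructor
  · rintro ⟨F, ⟨hF, hnF⟩, rfl⟩
    exact ⟨notMem_erase n F, by rwa [insert_erase hnF]⟩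
  · rintro ⟨hnu, hu⟩
    exact ⟨insert n u, ⟨hu, mem_insert_self n u⟩, erase_insert hnu⟩

lemma card_link : (link n X).card = (X.filter (n ∈ ·)).card := by
  refine card_image_of_injOn fun F hF F' hF' h => ?_
  rw [← insert_erase (mem_filter.mp hF).2, ← insert_erase (mem_filter.mp hF').2]
  exact congrArg (insert n) h

lemma mLe_pred_add_card_link (hX : X ⊆ M n d t) : mLe (n - 1) X + (link n X).card = X.card := by
  have h : X.filter (fun F => ¬ ∀ j ∈ F, j ≤ n - 1) = X.filter (n ∈ ·) := by
    refine filter_congr fun F hF => ⟨fun hF' => ?_, fun hn hF' => ?_⟩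
    · by_contra hn
      exact hF' fun j hj => by
        have := (mem_Icc_of_mem_M (hX hF) hj).2
        have : j ≠ n := fun h => hn (h ▸ hj)
        omega
    · have := hF' n hn
      have := (mem_Icc_of_mem_M (hX hF) hn).1
      omega
  rw [card_link, ← h]
  exact card_filter_add_card_filter_not _

lemma link_subset_M (hX : X ⊆ M n (e + 1) t) : link n X ⊆ M (n - t) e t := by
  intro u hu
  obtain ⟨hnu, hu⟩ := mem_link.mp hu
  have h := erase_mem_M_sub (hX hu) (mem_insert_self n u)
    (fun x hx => (mem_Icc_of_mem_M (hX hu) hx).2) le_rfl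
  rwa [erase_insert hnu] at h

lemma IsSSS.link (hN : IsSSS n (e + 1) t N) (ht : 1 ≤ t) : IsSSS (n - t) e t (link n N) := by
  refine ⟨link_subset_M hN.1, fun u hu j hj i hij hiu hv => ?_⟩
  obtain ⟨hnu, huN⟩ := mem_link.mp hu
  have hn : 1 ≤ n := (mem_Icc_of_mem_M (hN.1 huN) (mem_insert_self n u)).1
  have hjn : n ≠ j := fun h => hnu (h ▸ hj)
  have hin : i ≠ n := by have := mem_Icc_of_mem_M (link_subset_M hN.1 hu) hj; omega
  have hswap : insert i ((insert n u).erase j) = insert n (insert i (u.erase j)) := by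
    rw [erase_insert_of_ne hjn, insert_comm]
  have hmem := hN.2 _ huN j (mem_insert_of_mem hj) i hij (by simp [hin, hiu])
    (by rw [hswap]; exact insert_mem_M_of_mem_M_sub hv ht hn)
  rw [hswap] at hmem
  exact mem_link.mpr ⟨notMem_of_mem_M_sub hv ht, hmem⟩

lemma mem_link_of_lexGT (hL : IsLexSet n (e + 1) t L) (ht : 1 ≤ t) (hu : u ∈ M (n - t) e t)
    (hv : v ∈ M (n - t) e t) (huv : lexGT u v) (hvj : ∀ x ∈ v, x < j) (hjv : insert j v ∈ L) :
    u ∈ link n L := by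
  have hn : 1 ≤ n := by have := mem_Icc_of_mem_M (hL.1 hjv) (mem_insert_self j v); omega
  have hun : ∀ x ∈ u, x < n := fun x hx => by have := mem_Icc_of_mem_M hu hx; omega
  refine mem_link.mpr ⟨notMem_of_mem_M_sub hu ht, hL.2 _ hjv _ (insert_mem_M_of_mem_M_sub hu ht hn) ?_⟩
  exact lexGT_insert_insert (by rw [card_of_mem_M hu, card_of_mem_M hv]) hun hvj huv

section LexFamilyAboveLink

variable (hL : IsLexSet n (e + 1) t L) (ht : 1 ≤ t) (hHM : H ⊆ M (n - t) e t)
  (hH : ∀ u ∈ H, ∃ j, (∀ x ∈ u, x < j) ∧ insert j u ∈ L)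
include hL ht hHM hH

lemma isLexSet_union_link : IsLexSet (n - t) e t (H ∪ link n L) := by
  have hM : H ∪ link n L ⊆ M (n - t) e t := union_subset hHM (link_subset_M hL.1)
  refine ⟨hM, fun u hu v hv hvu => mem_union_right _ ?_⟩
  obtain ⟨j, huj, hj⟩ : ∃ j, (∀ x ∈ u, x < j) ∧ insert j u ∈ L := by
    rcases mem_union.mp hu with hu | hu
    · exact hH u hu
    · obtain ⟨hnu, hu⟩ := mem_link.mp hu
      refine ⟨n, fun x hx => ?_, hu⟩
      have := (mem_Icc_of_mem_M (hL.1 hu) (mem_insert_of_mem hx)).2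
      have : x ≠ n := fun h => hnu (h ▸ hx)
      omega
  exact mem_link_of_lexGT hL ht hv (hM hu) hvu huj hj

lemma card_sdiff_link_le_one : (H \ link n L).card ≤ 1 := by
  refine card_le_one.mpr fun a ha c hc => by_contra fun hac => ?_
  rw [mem_sdiff] at ha hc
  rcases lexGT_or_lexGT_of_ne hac with h | h
  · obtain ⟨j, hcj, hj⟩ := hH c hc.1
    exact ha.2 (mem_link_of_lexGT hL ht (hHM ha.1) (hHM hc.1) h hcj hj)
  · obtain ⟨j, haj, hj⟩ := hH a ha.1
    exact hc.2 (mem_link_of_lexGT hL ht (hHM hc.1) (hHM ha.1) h haj hj)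

end LexFamilyAboveLink

def spreadExt (t b : ℕ) (F : Finset ℕ) : Finset (Finset ℕ) :=
  (Icc (maxElt F + t) b).image (insert · F)

lemma mem_spreadExt : G ∈ spreadExt t b F ↔ ∃ j, (maxElt F + t ≤ j ∧ j ≤ b) ∧ insert j F = G := by
  simp only [spreadExt, mem_image, mem_Icc]

lemma forall_lt_of_maxElt_add_le (ht : 1 ≤ t) (hj : maxElt F + t ≤ j) : ∀ x ∈ F, x < j :=
  fun _ hx => by have := le_maxElt hx; omega

lemma card_spreadExt (ht : 1 ≤ t) : (spreadExt t b F).card = (Icc (maxElt F + t) b).card :=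
  card_image_of_injOn fun _ hj _ hj' h =>
    (eq_and_eq_of_insert_eq_insert (forall_lt_of_maxElt_add_le ht (mem_Icc.mp hj).1)
      (forall_lt_of_maxElt_add_le ht (mem_Icc.mp hj').1) h).1

lemma disjoint_spreadExt (ht : 1 ≤ t) {F' : Finset ℕ} (h : F ≠ F') :
    Disjoint (spreadExt t b F) (spreadExt t b F') := by
  refine disjoint_left.mpr fun G hG hG' => h ?_
  obtain ⟨j, ⟨hj, -⟩, rfl⟩ := mem_spreadExt.mp hG
  obtain ⟨j', ⟨hj', -⟩, hG'⟩ := mem_spreadExt.mp hG'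
  exact (eq_and_eq_of_insert_eq_insert (forall_lt_of_maxElt_add_le ht hj')
    (forall_lt_of_maxElt_add_le ht hj) hG').2.symm

lemma card_Icc_maxElt_add (h : 1 ≤ maxElt F) :
    (Icc (maxElt F + t) b).card = ((Icc 1 (b - t)).filter fun i => ∀ j ∈ F, j ≤ i).card := by
  have : (Icc 1 (b - t)).filter (fun i => ∀ j ∈ F, j ≤ i) = Icc (maxElt F) (b - t) := by
    ext i
    simp only [mem_filter, mem_Icc, ← maxElt_le_iff]
    omega
  rw [this, Nat.card_Icc, Nat.card_Icc]
  omega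

lemma card_biUnion_spreadExt (ht : 1 ≤ t) (hS : ∀ F ∈ S, 1 ≤ maxElt F) :
    (S.biUnion (spreadExt t b)).card = ∑ i ∈ Icc 1 (b - t), mLe i S := by
  rw [card_biUnion fun F _ F' _ h => disjoint_spreadExt ht h]
  simp only [mLe, card_filter]
  rw [sum_comm]
  refine sum_congr rfl fun F hF => ?_
  rw [card_spreadExt ht, card_Icc_maxElt_add (hS F hF), card_filter]

lemma mem_M_of_mem_spreadExt (hF : F ∈ M m d t) (ht : 1 ≤ t) (hG : G ∈ spreadExt t n F) :
    G ∈ M n (d + 1) t := by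
  obtain ⟨j, ⟨hj, hjn⟩, rfl⟩ := mem_spreadExt.mp hG
  exact insert_mem_M hF ht (fun x hx => by have := le_maxElt hx; omega) (by omega) hjn

lemma mem_spreadExt_erase_maxElt (hG : G ∈ M n d t) (hd : 2 ≤ d) (hb : maxElt G ≤ b) :
    G ∈ spreadExt t b (G.erase (maxElt G)) := by
  have hmG := maxElt_mem (card_pos.mp (by rw [card_of_mem_M hG]; omega))
  have hmax := maxElt_mem (card_pos.mp (by rw [card_erase_of_mem hmG, card_of_mem_M hG]; omega))
  exact mem_spreadExt.mpr ⟨maxElt G, ⟨add_le_of_mem_M hG (mem_of_mem_erase hmax) hmG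
    (lt_maxElt_of_mem_erase hmax), hb⟩, insert_erase hmG⟩

lemma erase_maxElt_mem_of_subset (hS : IsSSS n d t S) (hF : F ∈ S) (hG : G ∈ M n (d + 1) t)
    (hFG : F ⊆ G) : G.erase (maxElt G) ∈ S := by
  obtain ⟨k, hkF, rfl⟩ : ∃ k ∉ F, insert k F = G :=
    exists_eq_insert_iff.mpr ⟨hFG, by rw [card_of_mem_M hG, card_of_mem_M (hS.1 hF)]⟩
  by_cases hkm : k = maxElt (insert k F)
  · rwa [← hkm, erase_insert hkF]
  have hmF : maxElt (insert k F) ∈ F :=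
    (mem_insert.mp (maxElt_mem (insert_nonempty k F))).resolve_left (Ne.symm hkm)
  have hGm := erase_mem_M_sub hG (maxElt_mem (insert_nonempty k F)) (fun _ => le_maxElt)
    (mem_Icc_of_mem_M hG (maxElt_mem (insert_nonempty k F))).2
  rw [erase_insert_of_ne hkm] at hGm ⊢
  exact hS.2 F hF _ hmF k (lt_of_le_of_ne (le_maxElt (mem_insert_self k F)) hkm) hkF
    (M_mono (Nat.sub_le n t) hGm)

lemma shad_eq_biUnion_spreadExt (hS : IsSSS n d t S) (ht : 1 ≤ t) (hd : 1 ≤ d) :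
    shad t n d S = S.biUnion (spreadExt t n) := by
  ext G
  simp only [shad, mem_filter, mem_biUnion]
  constructor
  · rintro ⟨hG, F, hF, hFG⟩
    exact ⟨_, erase_maxElt_mem_of_subset hS hF hG hFG, mem_spreadExt_erase_maxElt hG (by omega)
      (maxElt_le_iff.mpr fun x hx => (mem_Icc_of_mem_M hG hx).2)⟩
  · rintro ⟨F, hF, hG⟩
    refine ⟨mem_M_of_mem_spreadExt (hS.1 hF) ht hG, F, hF, ?_⟩
    obtain ⟨j, -, rfl⟩ := mem_spreadExt.mp hG
    exact subset_insert j F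

lemma card_shad_eq_sum_mLe (hS : IsSSS n d t S) (ht : 1 ≤ t) (hd : 1 ≤ d) :
    (shad t n d S).card = ∑ i ∈ Icc 1 (n - t), mLe i S := by
  rw [shad_eq_biUnion_spreadExt hS ht hd,
    card_biUnion_spreadExt ht fun F hF => one_le_maxElt (hS.1 hF) hd]

lemma biUnion_spreadExt_link_subset (hN : IsSSS n (e + 1) t N) (ht : 1 ≤ t) :
    (link n N).biUnion (spreadExt t (n - 1)) ⊆ truncate (n - 1) N := by
  intro G hG
  obtain ⟨u, hu, hG⟩ := mem_biUnion.mp hG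
  obtain ⟨j, ⟨hj, hjn⟩, rfl⟩ := mem_spreadExt.mp hG
  obtain ⟨hnu, hnuN⟩ := mem_link.mp hu
  have hju := forall_lt_of_maxElt_add_le ht hj
  have hjM : insert j u ∈ M n (e + 1) t := insert_mem_M (link_subset_M hN.1 hu) ht
    (fun x hx => by have := le_maxElt hx; omega) (by omega) (by omega)
  have hjN := hN.2 _ hnuN n (mem_insert_self n u) j (by omega)
    (by simp only [mem_insert, not_or]; exact ⟨by omega, fun h => lt_irrefl j (hju j h)⟩)
    (by rwa [erase_insert hnu])
  rw [erase_insert hnu] at hjN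
  refine mem_filter.mpr ⟨hjN, fun x hx => ?_⟩
  rcases mem_insert.mp hx with rfl | hx
  · omega
  · have := hju x hx
    omega

lemma mLe_le_of_subset_M_one (hX : X ⊆ M n 1 t) : mLe m X ≤ m := by
  calc mLe m X ≤ ((Icc 1 m).image ({·})).card := card_le_card fun F hF => by
        obtain ⟨hFX, hFm⟩ := mem_filter.mp hF
        obtain ⟨a, rfl⟩ := card_eq_one.mp (card_of_mem_M (hX hFX))
        exact mem_image.mpr ⟨a, mem_Icc.mpr ⟨(mem_Icc_of_mem_M (hX hFX) (mem_singleton_self a)).1,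
          hFm a (mem_singleton_self a)⟩, rfl⟩
    _ ≤ (Icc 1 m).card := card_image_le
    _ = m := by simp

lemma pred_le_mLe_of_singleton_mem (hN : IsSSS n 1 t N) (hn : {n} ∈ N) :
    n - 1 ≤ mLe (n - 1) N := by
  calc n - 1 = ((Icc 1 (n - 1)).image ({·} : ℕ → Finset ℕ)).card := by
        rw [card_image_of_injective _ singleton_injective, Nat.card_Icc]; omega
    _ ≤ mLe (n - 1) N := card_le_card fun F hF => by
        obtain ⟨j, hj, rfl⟩ := mem_image.mp hF
        obtain ⟨hj1, hjn⟩ := mem_Icc.mp hj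
        have hjM : {j} ∈ M n 1 t := mem_M_iff.mpr ⟨card_singleton j, by simp; omega, by simp⟩
        have := hN.2 {n} hn n (mem_singleton_self n) j (by omega) (by simp; omega)
          (by rwa [erase_singleton])
        rw [erase_singleton] at this
        exact mem_filter.mpr ⟨this, by simpa⟩

lemma mLe_pred_le_of_card_link_lt (ht : 1 ≤ t) (he : 1 ≤ e)
    (IH : ∀ L' N' : Finset (Finset ℕ), IsLexSet (n - t) e t L' → IsSSS (n - t) e t N' →
      L'.card ≤ N'.card → ∀ i, mLe i L' ≤ mLe i N')
    (hL : IsLexSet n (e + 1) t L) (hN : IsSSS n (e + 1) t N)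
    (hlt : (link n L).card < (link n N).card) : mLe (n - 1) L ≤ mLe (n - 1) N := by
  set H := (truncate (n - 1) L).image fun F => F.erase (maxElt F)
  have hHM : H ⊆ M (n - t) e t := fun u hu => by
    obtain ⟨F, hF, rfl⟩ := mem_image.mp hu
    exact erase_maxElt_mem_M (hL.1 (mem_filter.mp hF).1)
  have hH : ∀ u ∈ H, ∃ j, (∀ x ∈ u, x < j) ∧ insert j u ∈ L := fun u hu => by
    obtain ⟨F, hF, rfl⟩ := mem_image.mp hu
    have hFL := (mem_filter.mp hF).1
    have hmF := maxElt_mem (card_pos.mp (by rw [card_of_mem_M (hL.1 hFL)]; omega))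
    exact ⟨maxElt F, fun _ => lt_maxElt_of_mem_erase, by rwa [insert_erase hmF]⟩
  have hlex := isLexSet_union_link hL ht hHM hH
  have hcard : (H ∪ link n L).card ≤ (link n N).card := by
    have := card_sdiff_link_le_one hL ht hHM hH
    rw [← card_sdiff_add_card]
    omega
  calc mLe (n - 1) L ≤ ((H ∪ link n L).biUnion (spreadExt t (n - 1))).card :=
        card_le_card fun F hF => mem_biUnion.mpr ⟨_, mem_union_left _ (mem_image_of_mem _ hF),
          mem_spreadExt_erase_maxElt (hL.1 (mem_filter.mp hF).1) (by omega)
            (maxElt_le_iff.mpr (mem_filter.mp hF).2)⟩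
    _ = ∑ i ∈ Icc 1 (n - 1 - t), mLe i (H ∪ link n L) :=
        card_biUnion_spreadExt ht fun u hu => one_le_maxElt (hlex.1 hu) he
    _ ≤ ∑ i ∈ Icc 1 (n - 1 - t), mLe i (link n N) :=
        sum_le_sum fun i _ => IH _ _ hlex (hN.link ht) hcard i
    _ = ((link n N).biUnion (spreadExt t (n - 1))).card :=
        (card_biUnion_spreadExt ht fun u hu => one_le_maxElt (link_subset_M hN.1 hu) he).symm
    _ ≤ mLe (n - 1) N := card_le_card (biUnion_spreadExt_link_subset hN ht)

lemma mLe_pred_le_mLe_pred (ht : 1 ≤ t)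
    (IH : ∀ L' N' : Finset (Finset ℕ), IsLexSet (n - t) e t L' → IsSSS (n - t) e t N' →
      L'.card ≤ N'.card → ∀ i, mLe i L' ≤ mLe i N')
    (hL : IsLexSet n (e + 1) t L) (hN : IsSSS n (e + 1) t N) (hcard : L.card ≤ N.card) :
    mLe (n - 1) L ≤ mLe (n - 1) N := by
  have hL' := mLe_pred_add_card_link hL.1
  have hN' := mLe_pred_add_card_link hN.1
  by_cases hlink : (link n N).card ≤ (link n L).card
  · omega
  rcases Nat.eq_zero_or_pos e with rfl | he
  · obtain ⟨u, hu⟩ : (link n N).Nonempty := card_pos.mp (by omega)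
    have hnN := (mem_link.mp hu).2
    rw [eq_empty_of_mem_M_zero (link_subset_M hN.1 hu), insert_empty] at hnN
    exact (mLe_le_of_subset_M_one hL.1).trans (pred_le_mLe_of_singleton_mem hN hnN)
  · exact mLe_pred_le_of_card_link_lt ht he IH hL hN (by omega)

theorem mLe_le_mLe_of_isLexSet_of_isSSS (ht : 1 ≤ t) :
    ∀ {d n : ℕ} {L N : Finset (Finset ℕ)}, IsLexSet n d t L → IsSSS n d t N →
      L.card ≤ N.card → ∀ i, mLe i L ≤ mLe i N := by
  intro d
  induction d with
  | zero =>
    intro n L N hL hN hcard i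
    have h : ∀ X, X ⊆ M n 0 t → mLe i X = X.card := fun X hX =>
      congrArg card <| filter_true_of_mem fun F hF => by simp [eq_empty_of_mem_M_zero (hX hF)]
    rwa [h L hL.1, h N hN.1]
  | succ e ih =>
    intro n
    induction n using Nat.strong_induction_on with
    | _ n ihn =>
    intro L N hL hN hcard i
    by_cases hni : n ≤ i
    · rwa [mLe_eq_card hL.1 hni, mLe_eq_card hN.1 hni]
    rw [← mLe_truncate (X := L) (m := n - 1) (by omega),
      ← mLe_truncate (X := N) (m := n - 1) (by omega)]
    exact ihn (n - 1) (by omega) (hL.truncate (by omega)) (hN.truncate (by omega))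
      (mLe_pred_le_mLe_pred ht (fun _ _ => ih) hL hN hcard) i

end Spread

/-- if `L` is a `t`-spread lex set and `N` a `t`-spread strongly stable
set in `M_{n,d,t}` with `|L| ≤ |N|`, then `|shad_t(L)| ≤ |shad_t(N)|`. -/
theorem card_shad_lex_le (n d t : ℕ) (ht : 1 ≤ t) (hd : 1 ≤ d)
    (L N : Finset (Finset ℕ)) (hL : IsLexSet n d t L) (hN : IsSSS n d t N)
    (hcard : L.card ≤ N.card) :
    (shad t n d L).card ≤ (shad t n d N).card := by
  rw [card_shad_eq_sum_mLe hL.isSSS ht hd, card_shad_eq_sum_mLe hN ht hd]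
  exact sum_le_sum fun i _ => mLe_le_mLe_of_isLexSet_of_isSSS ht hL hN hcard i
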